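/- Let d ≥ 1. For λ > 0, O ∈ O(d), a row vector v ∈ ℝ^d, and α ∈ ℝ, define the (d+2)×(d+2) real matrix M(λ, O, v, α) = λ · [[1, 0, 0], [vᵀ, O, 0], [α + ‖v‖²/2, v O, 1]] (blocks of sizes 1, d, 1). Then for all parameters: M(λ, O, v, α) · M(λ', O', w, α') = M(λ λ', O O', v + w Oᵀ, α + α'). Consequently, the set of all such matrices is a subgroup of GL(d+2, ℝ), the inverse is given by M(λ, O, v, α)⁻¹ = M(λ⁻¹, Oᵀ, −v O, −α), and the maps M(λ, O, v, α) ↦ α and M(λ, O, v, α) ↦ λ are group homomorphisms to (ℝ, +) and to the multiplicative group of positive reals, respectively. -/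

import Mathlib

/-!
Block multiplication of `M(λ, O, v, α) · M(λ', O', w, α')`. The first column, the middle block
and the diagonal are immediate; the only real computation is the corner entry, where
orthogonality of `O` gives `‖v + wOᵀ‖² = ‖v‖² + 2⟨vO, w⟩ + ‖w‖²`, and the cross term
`λλ'⟨vO, w⟩` of the product is exactly what the normalisation `α + ‖v‖²/2` absorbs. The inverse
formula and closure are then instances of the product formula, and the parameters can be read
off the entries since `λ ≠ 0`.
-/

open Matrix

/-- The matrix `M(λ, O, v, α) = λ·[[1,0,0],[vᵀ,O,0],[α+‖v‖²/2, vO, 1]]`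
(blocks of sizes `1, d, 1`). -/
noncomputable def stdMat (d : ℕ) (lam : ℝ) (O : Matrix (Fin d) (Fin d) ℝ)
    (v : Fin d → ℝ) (α : ℝ) :
    Matrix (Fin 1 ⊕ Fin d ⊕ Fin 1) (Fin 1 ⊕ Fin d ⊕ Fin 1) ℝ :=
  Matrix.of fun i j =>
    match i, j with
    | Sum.inl _, Sum.inl _ => lam
    | Sum.inl _, _ => 0
    | Sum.inr (Sum.inl k), Sum.inl _ => lam * v k
    | Sum.inr (Sum.inl k), Sum.inr (Sum.inl l) => lam * O k l
    | Sum.inr (Sum.inl _), Sum.inr (Sum.inr _) => 0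
    | Sum.inr (Sum.inr _), Sum.inl _ => lam * (α + dotProduct v v / 2)
    | Sum.inr (Sum.inr _), Sum.inr (Sum.inl l) => lam * vecMul v O l
    | Sum.inr (Sum.inr _), Sum.inr (Sum.inr _) => lam

section

variable {R n : Type*} [CommSemiring R] [Fintype n]

lemma sum_mul_mul_mul {ι : Type*} (s : Finset ι) (c c' : R) (f g : ι → R) :
    ∑ x ∈ s, c * f x * (c' * g x) = c * c' * ∑ x ∈ s, f x * g x := by
  rw [Finset.mul_sum]
  exact Finset.sum_congr rfl fun x _ => by ring

variable [DecidableEq n] {O : Matrix n n R}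

lemma vecMul_transpose_vecMul (hO : Oᵀ * O = 1) (w : n → R) : w ᵥ* Oᵀ ᵥ* O = w := by
  rw [vecMul_vecMul, hO, vecMul_one]

lemma dotProduct_add_vecMul_transpose_self (hO : Oᵀ * O = 1) (v w : n → R) :
    (v + w ᵥ* Oᵀ) ⬝ᵥ (v + w ᵥ* Oᵀ) = v ⬝ᵥ v + 2 * (v ᵥ* O ⬝ᵥ w) + w ⬝ᵥ w := by
  rw [dotProduct_add, add_dotProduct, add_dotProduct, dotProduct_comm v (w ᵥ* Oᵀ),
    dotProduct_vecMul_transpose, dotProduct_vecMul_transpose, vecMul_transpose_vecMul hO]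
  ring

end

theorem stdMat_mul (d : ℕ) (lam lam' : ℝ) {O : Matrix (Fin d) (Fin d) ℝ} (hO : Oᵀ * O = 1)
    (O' : Matrix (Fin d) (Fin d) ℝ) (v w : Fin d → ℝ) (α α' : ℝ) :
    stdMat d lam O v α * stdMat d lam' O' w α' =
      stdMat d (lam * lam') (O * O') (v + w ᵥ* Oᵀ) (α + α') := by
  ext i j
  rcases i with i | i | i <;> rcases j with j | j | j <;>
    simp only [stdMat, mul_apply, of_apply, Fintype.sum_sum_type, Fin.sum_univ_one,
      Pi.add_apply] <;>
    try rw [sum_mul_mul_mul]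
  · simp
  · simp
  · simp
  · rw [show ∑ x, O i x * w x = (w ᵥ* Oᵀ) i by rw [vecMul_transpose]; rfl]
    ring
  · rw [← mul_apply]
    ring
  · simp
  · rw [show ∑ x, (v ᵥ* O) x * w x = v ᵥ* O ⬝ᵥ w from rfl,
      dotProduct_add_vecMul_transpose_self hO]
    ring
  · rw [show ∑ x, (v ᵥ* O) x * O' x j = (v ᵥ* O ᵥ* O') j from rfl, add_vecMul,
      ← vecMul_vecMul, ← vecMul_vecMul (w ᵥ* Oᵀ), vecMul_transpose_vecMul hO, Pi.add_apply]
    ring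
  · simp

theorem stdMat_one (d : ℕ) : stdMat d 1 1 0 0 = 1 := by
  ext i j
  rcases i with i | i | i <;> rcases j with j | j | j <;>
    simp [stdMat, one_apply, Fin.eq_zero]

theorem stdMat_mul_stdMat_inv (d : ℕ) {lam : ℝ} (hlam : lam ≠ 0)
    {O : Matrix (Fin d) (Fin d) ℝ} (hO : O ∈ orthogonalGroup (Fin d) ℝ) (v : Fin d → ℝ) (α : ℝ) :
    stdMat d lam O v α * stdMat d lam⁻¹ Oᵀ (-(v ᵥ* O)) (-α) = 1 := by
  have hOO : O * Oᵀ = 1 := (mem_orthogonalGroup_iff _ _).mp hO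
  rw [stdMat_mul d _ _ ((mem_orthogonalGroup_iff' _ _).mp hO), neg_vecMul, vecMul_vecMul, hOO,
    vecMul_one, add_neg_cancel, mul_inv_cancel₀ hlam, add_neg_cancel, stdMat_one]

theorem stdMat_inv_mul_stdMat (d : ℕ) {lam : ℝ} (hlam : lam ≠ 0)
    {O : Matrix (Fin d) (Fin d) ℝ} (hO : O ∈ orthogonalGroup (Fin d) ℝ) (v : Fin d → ℝ) (α : ℝ) :
    stdMat d lam⁻¹ Oᵀ (-(v ᵥ* O)) (-α) * stdMat d lam O v α = 1 := by
  rw [stdMat_mul d _ _ (by rw [transpose_transpose]; exact (mem_orthogonalGroup_iff _ _).mp hO),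
    transpose_transpose, neg_add_cancel, inv_mul_cancel₀ hlam,
    (mem_orthogonalGroup_iff' _ _).mp hO, neg_add_cancel, stdMat_one]

theorem stdMat_inj (d : ℕ) {lam lam' : ℝ} (hlam : lam ≠ 0) {O O' : Matrix (Fin d) (Fin d) ℝ}
    {v v' : Fin d → ℝ} {α α' : ℝ} :
    stdMat d lam O v α = stdMat d lam' O' v' α' ↔ lam = lam' ∧ O = O' ∧ v = v' ∧ α = α' := by
  refine ⟨fun h => ?_, by rintro ⟨rfl, rfl, rfl, rfl⟩; rfl⟩
  have entry := fun i j => congrFun (congrFun h i) j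
  have hl : lam = lam' := by simpa [stdMat] using entry (Sum.inl 0) (Sum.inl 0)
  subst hl
  have hv : v = v' := funext fun k => by
    simpa [stdMat, hlam] using entry (Sum.inr (Sum.inl k)) (Sum.inl 0)
  subst hv
  refine ⟨rfl, ?_, rfl, ?_⟩
  · ext k l
    simpa [stdMat, hlam] using entry (Sum.inr (Sum.inl k)) (Sum.inr (Sum.inl l))
  · simpa [stdMat, hlam] using entry (Sum.inr (Sum.inr 0)) (Sum.inl 0)

theorem stmt6_general (d : ℕ) :
    -- product formula
    (∀ (lam lam' : ℝ), 0 < lam → 0 < lam' →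
      ∀ (O O' : Matrix (Fin d) (Fin d) ℝ),
        O ∈ Matrix.orthogonalGroup (Fin d) ℝ → O' ∈ Matrix.orthogonalGroup (Fin d) ℝ →
      ∀ (v w : Fin d → ℝ) (α α' : ℝ),
        stdMat d lam O v α * stdMat d lam' O' w α' =
          stdMat d (lam * lam') (O * O') (v + vecMul w Oᵀ) (α + α')) ∧
    -- the identity matrix is of this form
    ((1 : Matrix (Fin 1 ⊕ Fin d ⊕ Fin 1) (Fin 1 ⊕ Fin d ⊕ Fin 1) ℝ) =
      stdMat d 1 1 0 0) ∧
    -- inverse formula: `M(λ,O,v,α)⁻¹ = M(λ⁻¹, Oᵀ, −vO, −α)`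
    (∀ (lam : ℝ), 0 < lam → ∀ O ∈ Matrix.orthogonalGroup (Fin d) ℝ,
      ∀ (v : Fin d → ℝ) (α : ℝ),
        stdMat d lam O v α * stdMat d lam⁻¹ Oᵀ (-(vecMul v O)) (-α) = 1 ∧
        stdMat d lam⁻¹ Oᵀ (-(vecMul v O)) (-α) * stdMat d lam O v α = 1 ∧
        IsUnit (stdMat d lam O v α) ∧
        (stdMat d lam O v α)⁻¹ = stdMat d lam⁻¹ Oᵀ (-(vecMul v O)) (-α)) ∧
    -- the set of all such matrices is closed under multiplication (a subgroup of GL)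
    (∀ A B : Matrix (Fin 1 ⊕ Fin d ⊕ Fin 1) (Fin 1 ⊕ Fin d ⊕ Fin 1) ℝ,
      A ∈ {A | ∃ lam O v α, 0 < lam ∧ O ∈ Matrix.orthogonalGroup (Fin d) ℝ ∧
        A = stdMat d lam O v α} →
      B ∈ {A | ∃ lam O v α, 0 < lam ∧ O ∈ Matrix.orthogonalGroup (Fin d) ℝ ∧
        A = stdMat d lam O v α} →
      A * B ∈ {A | ∃ lam O v α, 0 < lam ∧ O ∈ Matrix.orthogonalGroup (Fin d) ℝ ∧
        A = stdMat d lam O v α}) ∧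
    -- the parameters `λ, O, v, α` are uniquely determined (so that `M ↦ λ` and
    -- `M ↦ α` are well-defined group homomorphisms by the product formula)
    (∀ (lam lam' : ℝ), 0 < lam → 0 < lam' →
      ∀ (O O' : Matrix (Fin d) (Fin d) ℝ) (v v' : Fin d → ℝ) (α α' : ℝ),
        stdMat d lam O v α = stdMat d lam' O' v' α' →
        lam = lam' ∧ O = O' ∧ v = v' ∧ α = α') := by
  refine ⟨?_, (stdMat_one d).symm, ?_, ?_, ?_⟩
  · intro lam lam' _ _ O O' hO _ v w α α'
    exact stdMat_mul d lam lam' ((mem_orthogonalGroup_iff' _ _).mp hO) O' v w α α'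
  · intro lam hlam O hO v α
    have hA := stdMat_mul_stdMat_inv d hlam.ne' hO v α
    have hB := stdMat_inv_mul_stdMat d hlam.ne' hO v α
    exact ⟨hA, hB, ⟨⟨_, _, hA, hB⟩, rfl⟩, inv_eq_right_inv hA⟩
  · rintro A B ⟨lam, O, v, α, hl, hO, rfl⟩ ⟨lam', O', w, α', hl', hO', rfl⟩
    exact ⟨_, _, _, _, mul_pos hl hl', mul_mem hO hO',
      stdMat_mul d lam lam' ((mem_orthogonalGroup_iff' _ _).mp hO) O' v w α α'⟩
  · intro lam lam' hlam _ O O' v v' α α' h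
    exact (stdMat_inj d hlam.ne').mp h

/-- equation (4.29) and Section 4.3 of the paper.
The matrices `M(λ, O, v, α)` (for `λ > 0`, `O ∈ O(d)`) satisfy the product formula
`M(λ,O,v,α)·M(λ',O',w,α') = M(λλ', OO', v + wOᵀ, α + α')`; consequently they form a
subgroup of `GL(d+2, ℝ)` (it contains the identity, is closed under products, and
`M(λ,O,v,α)⁻¹ = M(λ⁻¹, Oᵀ, −vO, −α)`), the parameters are uniquely determined, and
`M ↦ α`, `M ↦ λ` are group homomorphisms to `(ℝ,+)` and to the positive reals. -/
theorem stmt6 (d : ℕ) (hd : 1 ≤ d) :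
    -- product formula
    (∀ (lam lam' : ℝ), 0 < lam → 0 < lam' →
      ∀ (O O' : Matrix (Fin d) (Fin d) ℝ),
        O ∈ Matrix.orthogonalGroup (Fin d) ℝ → O' ∈ Matrix.orthogonalGroup (Fin d) ℝ →
      ∀ (v w : Fin d → ℝ) (α α' : ℝ),
        stdMat d lam O v α * stdMat d lam' O' w α' =
          stdMat d (lam * lam') (O * O') (v + vecMul w Oᵀ) (α + α')) ∧
    -- the identity matrix is of this form
    ((1 : Matrix (Fin 1 ⊕ Fin d ⊕ Fin 1) (Fin 1 ⊕ Fin d ⊕ Fin 1) ℝ) =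
      stdMat d 1 1 0 0) ∧
    -- inverse formula: `M(λ,O,v,α)⁻¹ = M(λ⁻¹, Oᵀ, −vO, −α)`
    (∀ (lam : ℝ), 0 < lam → ∀ O ∈ Matrix.orthogonalGroup (Fin d) ℝ,
      ∀ (v : Fin d → ℝ) (α : ℝ),
        stdMat d lam O v α * stdMat d lam⁻¹ Oᵀ (-(vecMul v O)) (-α) = 1 ∧
        stdMat d lam⁻¹ Oᵀ (-(vecMul v O)) (-α) * stdMat d lam O v α = 1 ∧
        IsUnit (stdMat d lam O v α) ∧
        (stdMat d lam O v α)⁻¹ = stdMat d lam⁻¹ Oᵀ (-(vecMul v O)) (-α)) ∧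
    -- the set of all such matrices is closed under multiplication (a subgroup of GL)
    (∀ A B : Matrix (Fin 1 ⊕ Fin d ⊕ Fin 1) (Fin 1 ⊕ Fin d ⊕ Fin 1) ℝ,
      A ∈ {A | ∃ lam O v α, 0 < lam ∧ O ∈ Matrix.orthogonalGroup (Fin d) ℝ ∧
        A = stdMat d lam O v α} →
      B ∈ {A | ∃ lam O v α, 0 < lam ∧ O ∈ Matrix.orthogonalGroup (Fin d) ℝ ∧
        A = stdMat d lam O v α} →
      A * B ∈ {A | ∃ lam O v α, 0 < lam ∧ O ∈ Matrix.orthogonalGroup (Fin d) ℝ ∧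
        A = stdMat d lam O v α}) ∧
    -- the parameters `λ, O, v, α` are uniquely determined (so that `M ↦ λ` and
    -- `M ↦ α` are well-defined group homomorphisms by the product formula)
    (∀ (lam lam' : ℝ), 0 < lam → 0 < lam' →
      ∀ (O O' : Matrix (Fin d) (Fin d) ℝ) (v v' : Fin d → ℝ) (α α' : ℝ),
        stdMat d lam O v α = stdMat d lam' O' v' α' →
        lam = lam' ∧ O = O' ∧ v = v' ∧ α = α') :=
  stmt6_general d
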